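/- Fix a real τ with 0 < τ < 1. With α = 1, I_d(t) = ∫_1^d k^{−1}(1 − k^{−1})^t dk and H_{d,1} = Σ_{k=1}^d k^{−1}, one has lim_{d→∞} I_d(d^τ) / H_{d,1} = 1 − τ. -/

import Mathlib

/-!
Write `L = log x` and `t = x ^ τ = exp (τ L)`. On `[1, B]` the factor `(1 - 1/k) ^ t ≤ exp (-t/k)`
is at most `exp (-t/B)`, on `[A, x]` Bernoulli's inequality gives `(1 - 1/k) ^ t ≥ 1 - t/A`, and
elsewhere the factor lies in `[0, 1]`. Comparing with `∫ dk/k = log`, the integral lies between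
`(1 - t/A) log (x/A)` and `exp (-t/B) log B + log (x/B)`. The cuts `B = t/L` and `A = t L` make both
bounds `(1 - τ) L + O(log L)`, while `H_{d,1} = log d + O(1)`.
-/

open Filter Topology MeasureTheory Real Set intervalIntegral

noncomputable def zipfIntegral (x t : ℝ) : ℝ := ∫ k in (1 : ℝ)..x, k⁻¹ * (1 - k⁻¹) ^ t

section Bounds

variable {a b c k t x : ℝ}

lemma one_sub_inv_rpow_le_exp (ht : 0 ≤ t) (hk : 1 ≤ k) : (1 - k⁻¹) ^ t ≤ exp (-(t / k)) := by
  have hk' : k⁻¹ ≤ 1 := inv_le_one_of_one_le₀ hk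
  calc (1 - k⁻¹) ^ t ≤ exp (-k⁻¹) ^ t := by
        gcongr
        linarith [add_one_le_exp (-k⁻¹)]
    _ = exp (-(t / k)) := by rw [← exp_mul]; ring_nf

lemma one_sub_div_le_one_sub_inv_rpow (ht : 1 ≤ t) (hk : 1 ≤ k) : 1 - t / k ≤ (1 - k⁻¹) ^ t := by
  have hk' : k⁻¹ ≤ 1 := inv_le_one_of_one_le₀ hk
  have := one_add_mul_self_le_rpow_one_add (s := -k⁻¹) (by linarith) ht
  rw [← sub_eq_add_neg] at this
  calc 1 - t / k = 1 + t * -k⁻¹ := by ring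
    _ ≤ _ := this

lemma one_sub_inv_rpow_le_one (ht : 0 ≤ t) (hk : 1 ≤ k) : (1 - k⁻¹) ^ t ≤ 1 := by
  have hk' : k⁻¹ ≤ 1 := inv_le_one_of_one_le₀ hk
  exact rpow_le_one (by linarith) (by linarith [inv_nonneg.2 (zero_le_one.trans hk)]) ht

lemma integral_inv_mul_le {g : ℝ → ℝ} (ha : 0 < a) (hab : a ≤ b)
    (hg : IntervalIntegrable (fun k => k⁻¹ * g k) volume a b) (hgc : ∀ k ∈ Icc a b, g k ≤ c) :
    ∫ k in a..b, k⁻¹ * g k ≤ log (b / a) * c := by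
  rw [← integral_inv_of_pos ha (ha.trans_le hab), ← intervalIntegral.integral_mul_const]
  refine integral_mono_on hab hg ?_ fun k hk => ?_
  · exact (intervalIntegrable_inv_iff.2 (.inr (notMem_uIcc_of_lt ha (ha.trans_le hab)))).mul_const c
  · exact mul_le_mul_of_nonneg_left (hgc k hk) (inv_nonneg.2 (ha.trans_le hk.1).le)

lemma le_integral_inv_mul {g : ℝ → ℝ} (ha : 0 < a) (hab : a ≤ b)
    (hg : IntervalIntegrable (fun k => k⁻¹ * g k) volume a b) (hcg : ∀ k ∈ Icc a b, c ≤ g k) :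
    log (b / a) * c ≤ ∫ k in a..b, k⁻¹ * g k := by
  rw [← integral_inv_of_pos ha (ha.trans_le hab), ← intervalIntegral.integral_mul_const]
  refine integral_mono_on hab ?_ hg fun k hk => ?_
  · exact (intervalIntegrable_inv_iff.2 (.inr (notMem_uIcc_of_lt ha (ha.trans_le hab)))).mul_const c
  · exact mul_le_mul_of_nonneg_left (hcg k hk) (inv_nonneg.2 (ha.trans_le hk.1).le)

lemma intervalIntegrable_inv_mul_one_sub_inv_rpow (ht : 0 ≤ t) (ha : 0 < a) (hab : a ≤ b) :
    IntervalIntegrable (fun k : ℝ => k⁻¹ * (1 - k⁻¹) ^ t) volume a b := by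
  refine ContinuousOn.intervalIntegrable fun k hk => ?_
  have hk0 : k ≠ 0 := (ha.trans_le (uIcc_of_le hab ▸ hk).1).ne'
  exact ((continuousAt_inv₀ hk0).mul
    ((continuousAt_const.sub (continuousAt_inv₀ hk0)).rpow_const (Or.inr ht))).continuousWithinAt

lemma zipfIntegral_le {B : ℝ} (ht : 0 ≤ t) (hB : 1 ≤ B) (hBx : B ≤ x) :
    zipfIntegral x t ≤ log B * exp (-(t / B)) + log (x / B) := by
  have hB0 : 0 < B := one_pos.trans_le hB
  have int_head := intervalIntegrable_inv_mul_one_sub_inv_rpow ht one_pos hB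
  have int_tail := intervalIntegrable_inv_mul_one_sub_inv_rpow ht hB0 hBx
  have head := integral_inv_mul_le one_pos hB int_head fun k hk =>
    (one_sub_inv_rpow_le_exp ht hk.1).trans <| exp_le_exp.2 <| neg_le_neg <|
      div_le_div_of_nonneg_left ht (one_pos.trans_le hk.1) hk.2
  have tail := integral_inv_mul_le hB0 hBx int_tail fun k hk =>
    one_sub_inv_rpow_le_one ht (hB.trans hk.1)
  rw [div_one] at head
  rw [zipfIntegral, ← integral_add_adjacent_intervals int_head int_tail]
  linarith

lemma le_zipfIntegral {A : ℝ} (ht : 1 ≤ t) (hA : 1 ≤ A) (hAx : A ≤ x) :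
    log (x / A) * (1 - t / A) ≤ zipfIntegral x t := by
  have ht0 : 0 ≤ t := zero_le_one.trans ht
  have hA0 : 0 < A := one_pos.trans_le hA
  have int_head := intervalIntegrable_inv_mul_one_sub_inv_rpow ht0 one_pos hA
  have int_tail := intervalIntegrable_inv_mul_one_sub_inv_rpow ht0 hA0 hAx
  have head : 0 ≤ ∫ k in (1 : ℝ)..A, k⁻¹ * (1 - k⁻¹) ^ t :=
    integral_nonneg hA fun k hk => mul_nonneg (inv_nonneg.2 (zero_le_one.trans hk.1))
      (rpow_nonneg (sub_nonneg.2 (inv_le_one_of_one_le₀ hk.1)) t)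
  have tail := le_integral_inv_mul hA0 hAx int_tail fun k hk =>
    (sub_le_sub_left (div_le_div_of_nonneg_left ht0 hA0 hk.1) 1).trans
      (one_sub_div_le_one_sub_inv_rpow ht (hA.trans hk.1))
  rw [zipfIntegral, ← integral_add_adjacent_intervals int_head int_tail]
  linarith

end Bounds

section Asymptotics

variable {τ L : ℝ}

lemma zipfIntegral_exp_le (hτ1 : τ ≤ 1) (hL : 1 ≤ L) (h : log L ≤ τ * L) :
    zipfIntegral (exp L) (exp (τ * L)) ≤ L * (exp (-L) + (1 - τ) + log L / L) := by
  have hL0 : 0 < L := one_pos.trans_le hL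
  have hτL : τ * L ≤ L := mul_le_of_le_one_left hL0.le hτ1
  have hlogL : 0 ≤ log L := log_nonneg hL
  have bound := zipfIntegral_le (exp_pos (τ * L)).le (one_le_exp (x := τ * L - log L) (by linarith))
    (exp_le_exp.2 (show τ * L - log L ≤ L by linarith))
  rw [← exp_sub, sub_sub_cancel, exp_log hL0, ← exp_sub, log_exp, log_exp] at bound
  calc _ ≤ (τ * L - log L) * exp (-L) + (L - (τ * L - log L)) := bound
    _ ≤ L * exp (-L) + (L - (τ * L - log L)) := by gcongr; linarith
    _ = L * (exp (-L) + (1 - τ) + log L / L) := by field_simp; ring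

lemma le_zipfIntegral_exp (hτ0 : 0 ≤ τ) (hL : 1 ≤ L) (h : log L ≤ (1 - τ) * L) :
    L * ((1 - L⁻¹) * (1 - τ - log L / L)) ≤ zipfIntegral (exp L) (exp (τ * L)) := by
  have hL0 : 0 < L := one_pos.trans_le hL
  have hτL : 0 ≤ τ * L := mul_nonneg hτ0 hL0.le
  have bound := le_zipfIntegral (one_le_exp hτL) (one_le_exp (x := τ * L + log L)
    (by linarith [log_nonneg hL])) (exp_le_exp.2 (show τ * L + log L ≤ L by linarith))
  rw [← exp_sub, ← exp_sub, log_exp, show τ * L - (τ * L + log L) = -log L by ring, exp_neg,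
    exp_log hL0] at bound
  convert bound using 1
  field_simp
  ring

theorem tendsto_zipfIntegral_exp_div (hτ0 : 0 < τ) (hτ1 : τ < 1) :
    Tendsto (fun L => zipfIntegral (exp L) (exp (τ * L)) / L) atTop (𝓝 (1 - τ)) := by
  have hlog : Tendsto (fun L => log L / L) atTop (𝓝 0) := by
    simpa using tendsto_pow_log_div_mul_add_atTop 1 0 1 one_ne_zero
  have lower : Tendsto (fun L => (1 - L⁻¹) * (1 - τ - log L / L)) atTop (𝓝 (1 - τ)) := by
    simpa using ((tendsto_const_nhds (x := (1 : ℝ))).sub tendsto_inv_atTop_zero).mul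
      ((tendsto_const_nhds (x := 1 - τ)).sub hlog)
  have upper : Tendsto (fun L => exp (-L) + (1 - τ) + log L / L) atTop (𝓝 (1 - τ)) := by
    simpa using (tendsto_exp_neg_atTop_nhds_zero.add_const (1 - τ)).add hlog
  have small : ∀ c > 0, ∀ᶠ L in atTop, log L ≤ c * L := fun c hc => by
    filter_upwards [hlog.eventually (ge_mem_nhds hc), eventually_gt_atTop 0] with L h hL
    exact (div_le_iff₀ hL).1 h
  refine tendsto_of_tendsto_of_tendsto_of_le_of_le' lower upper ?_ ?_
  · filter_upwards [eventually_ge_atTop 1, small (1 - τ) (by linarith)] with L hL h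
    exact (le_div_iff₀' (one_pos.trans_le hL)).2 (le_zipfIntegral_exp hτ0.le hL h)
  · filter_upwards [eventually_ge_atTop 1, small τ hτ0] with L hL h
    exact (div_le_iff₀' (one_pos.trans_le hL)).2 (zipfIntegral_exp_le hτ1.le hL h)

theorem tendsto_zipfIntegral_rpow_div_log (hτ0 : 0 < τ) (hτ1 : τ < 1) :
    Tendsto (fun x => zipfIntegral x (x ^ τ) / log x) atTop (𝓝 (1 - τ)) := by
  refine ((tendsto_zipfIntegral_exp_div hτ0 hτ1).comp tendsto_log_atTop).congr' ?_
  filter_upwards [eventually_gt_atTop 0] with x hx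
  rw [Function.comp_apply, exp_log hx, rpow_def_of_pos hx, mul_comm (log x)]

end Asymptotics

lemma tendsto_harmonic_div_log : Tendsto (fun n : ℕ => (harmonic n : ℝ) / log n) atTop (𝓝 1) := by
  have hlog := tendsto_log_atTop.comp tendsto_natCast_atTop_atTop
  have := (tendsto_harmonic_sub_log.div_atTop hlog).const_add 1
  rw [add_zero] at this
  refine this.congr' ?_
  filter_upwards [hlog.eventually_gt_atTop 0] with n hn
  simp only [Function.comp_apply] at hn ⊢
  field_simp
  ring

theorem stmt5 (τ : ℝ) (hτ0 : 0 < τ) (hτ1 : τ < 1) :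
    Tendsto
      (fun d : ℕ =>
        (∫ k in (1 : ℝ)..(d : ℝ), k ^ (-1 : ℝ) * (1 - k ^ (-1 : ℝ)) ^ ((d : ℝ) ^ τ)) /
        (∑ k ∈ Finset.Icc 1 d, (k : ℝ) ^ (-1 : ℝ)))
      atTop (nhds (1 - τ)) := by
  have hI := (tendsto_zipfIntegral_rpow_div_log hτ0 hτ1).comp tendsto_natCast_atTop_atTop
  have hratio := hI.div tendsto_harmonic_div_log one_ne_zero
  rw [div_one] at hratio
  refine hratio.congr' ?_
  filter_upwards [eventually_gt_atTop 1] with d hd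
  have hlog : log d ≠ 0 := (log_pos (by exact_mod_cast hd)).ne'
  have sum_eq_harmonic : (∑ k ∈ Finset.Icc 1 d, (k : ℝ) ^ (-1 : ℝ)) = harmonic d := by
    simp [harmonic_eq_sum_Icc, rpow_neg_one]
  rw [sum_eq_harmonic]
  simp only [Pi.div_apply, Function.comp_apply, zipfIntegral, rpow_neg_one]
  field_simp
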